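/- arXiv:0705.4571 — 3 statements merged into one kernel-verified Lean document; each statement's English description precedes it below -/
import Mathlib

section
/- Let K be a field of characteristic zero and c ∈ K with c not an integer. The K-linear map T : K[z, z⁻¹] → K[z, z⁻¹] defined by T(f) = z·f' + c·f + z·f is injective and its cokernel is one-dimensional over K. (This is the algebraic 'Gauss sum' computation: H(G_m, Ψ(c) ⊗ exp) is one-dimensional, concentrated in degree 0.) -/
/-- Multiplication by `z` on Laurent polynomials `K[z, z⁻¹]`, encoded as finitely
supported functions `ℤ →₀ K` (the coefficient of `zⁿ` sits in degree `n`). -/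
noncomputable def zmul (K : Type*) [Field K] : (ℤ →₀ K) →ₗ[K] (ℤ →₀ K) :=
  Finsupp.lsum K fun n => Finsupp.lsingle (n + 1)

/-- The formal derivative `f ↦ f'` on Laurent polynomials: `zⁿ ↦ n z^(n-1)`. -/
noncomputable def zderiv (K : Type*) [Field K] : (ℤ →₀ K) →ₗ[K] (ℤ →₀ K) :=
  Finsupp.lsum K fun n => (Finsupp.lsingle (n - 1)).comp (LinearMap.lsmul K K (n : K))

/-- The operator `T f = z·f' + c·f + z·f` (the connection of `Ψ(c) ⊗ exp` multiplied
by `z`). -/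
noncomputable def gaussOp (K : Type*) [Field K] (c : K) : (ℤ →₀ K) →ₗ[K] (ℤ →₀ K) :=
  (zmul K).comp (zderiv K) + c • LinearMap.id + zmul K

/-!
Since `T zⁿ = (n + c) zⁿ + zⁿ⁺¹` and `n + c ≠ 0` for every integer `n`, the lowest and the
highest coefficient of a nonzero `g` survive in `T g`, in degrees `min g` and `max g + 1`.
So `T g` has at least two terms: `T` is injective and misses the monomial `1`. Conversely,
`T zⁿ` lets one move `zⁿ⁺¹` to `zⁿ` and back modulo the range of `T`, so every monomial is
congruent to a multiple of `1`, and the cokernel is spanned by the class of `1`.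
-/

theorem Submodule.finrank_quotient_eq_one_of_sup_span_singleton_eq_top {K V : Type*} [Field K]
    [AddCommGroup V] [Module K V] {p : Submodule K V} {v : V} (hv : v ∉ p)
    (hsup : p ⊔ K ∙ v = ⊤) : Module.finrank K (V ⧸ p) = 1 := by
  have hv0 : v ≠ 0 := fun h => hv (h ▸ p.zero_mem)
  have hcompl : IsCompl p (K ∙ v) :=
    ⟨(Submodule.disjoint_span_singleton' hv0).mpr hv, codisjoint_iff.mpr hsup⟩
  exact (p.quotientEquivOfIsCompl _ hcompl).finrank_eq.trans (finrank_span_singleton hv0)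

section

variable {K : Type*} [Field K] (c : K)

theorem gaussOp_single (n : ℤ) (b : K) :
    gaussOp K c (Finsupp.single n b) =
      Finsupp.single n (((n : K) + c) * b) + Finsupp.single (n + 1) b := by
  simp only [gaussOp, LinearMap.add_apply, LinearMap.comp_apply, LinearMap.smul_apply,
    LinearMap.id_apply, zmul, zderiv, Finsupp.lsum_single, Finsupp.lsingle_apply,
    LinearMap.lsmul_apply, smul_eq_mul, Finsupp.smul_single, sub_add_cancel]
  rw [add_mul, Finsupp.single_add (a := n)]

theorem gaussOp_apply (f : ℤ →₀ K) (k : ℤ) :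
    gaussOp K c f k = ((k : K) + c) * f k + f (k - 1) := by
  induction f using Finsupp.induction_linear with
  | zero => simp
  | add f g hf hg => simp only [map_add, Finsupp.add_apply, hf, hg]; ring
  | single n b =>
    rw [gaussOp_single]
    simp only [Finsupp.add_apply, Finsupp.single_apply]
    split_ifs <;> first | (exfalso; omega) | (subst_vars; push_cast; ring1)

theorem gaussOp_apply_min' (g : ℤ →₀ K) (hg : g.support.Nonempty) :
    gaussOp K c g (g.support.min' hg) =
      ((g.support.min' hg : K) + c) * g (g.support.min' hg) := by
  have hbelow : g (g.support.min' hg - 1) = 0 :=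
    Finsupp.notMem_support_iff.mp fun h => by have := g.support.min'_le _ h; omega
  rw [gaussOp_apply, hbelow, add_zero]

theorem gaussOp_apply_max'_add_one (g : ℤ →₀ K) (hg : g.support.Nonempty) :
    gaussOp K c g (g.support.max' hg + 1) = g (g.support.max' hg) := by
  have habove : g (g.support.max' hg + 1) = 0 :=
    Finsupp.notMem_support_iff.mp fun h => by have := g.support.le_max' _ h; omega
  rw [gaussOp_apply, habove, mul_zero, zero_add, add_sub_cancel_right]

variable {c}

theorem one_lt_card_support_gaussOp (hc : ∀ k : ℤ, (k : K) + c ≠ 0) {g : ℤ →₀ K}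
    (hg : g ≠ 0) :
    1 < (gaussOp K c g).support.card := by
  have hs := Finsupp.support_nonempty_iff.mpr hg
  have hmin := Finsupp.mem_support_iff.mp (g.support.min'_mem hs)
  have hmax := Finsupp.mem_support_iff.mp (g.support.max'_mem hs)
  refine Finset.one_lt_card.mpr ⟨g.support.min' hs, ?_, g.support.max' hs + 1, ?_, ?_⟩
  · rw [Finsupp.mem_support_iff, gaussOp_apply_min']
    exact mul_ne_zero (hc _) hmin
  · rwa [Finsupp.mem_support_iff, gaussOp_apply_max'_add_one]
  · have := g.support.min'_le _ (g.support.max'_mem hs)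
    omega

theorem gaussOp_injective (hc : ∀ k : ℤ, (k : K) + c ≠ 0) :
    Function.Injective (gaussOp K c) := by
  refine (injective_iff_map_eq_zero _).mpr fun g hTg => ?_
  by_contra hg
  simpa [hTg] using one_lt_card_support_gaussOp hc hg

theorem single_zero_one_notMem_range_gaussOp (hc : ∀ k : ℤ, (k : K) + c ≠ 0) :
    Finsupp.single 0 1 ∉ LinearMap.range (gaussOp K c) := by
  rintro ⟨g, hg⟩
  have hg0 : g ≠ 0 := by
    rintro rfl
    simp [eq_comm] at hg
  simpa [hg] using one_lt_card_support_gaussOp hc hg0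

theorem range_gaussOp_sup_span_single_zero_eq_top (hc : ∀ k : ℤ, (k : K) + c ≠ 0) :
    LinearMap.range (gaussOp K c) ⊔ K ∙ Finsupp.single 0 1 = ⊤ := by
  set S := LinearMap.range (gaussOp K c) ⊔ K ∙ Finsupp.single 0 1
  have hT (n : ℤ) : gaussOp K c (Finsupp.single n 1) ∈ S :=
    Submodule.mem_sup_left (LinearMap.mem_range_self _ _)
  have hmonomial (n : ℤ) : Finsupp.single n 1 ∈ S := by
    induction n using Int.induction_on with
    | zero => exact Submodule.mem_sup_right (Submodule.mem_span_singleton_self _)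
    | succ n ih =>
      have hstep : Finsupp.single ((n : ℤ) + 1) (1 : K) =
          gaussOp K c (Finsupp.single n 1) -
            (((n : ℤ) : K) + c) • Finsupp.single (n : ℤ) 1 := by
        rw [gaussOp_single, Finsupp.smul_single_one, mul_one, add_sub_cancel_left]
      exact hstep ▸ S.sub_mem (hT n) (S.smul_mem _ ih)
    | pred n ih =>
      have hstep : Finsupp.single (-(n : ℤ) - 1) (1 : K) =
          (((-(n : ℤ) - 1 : ℤ) : K) + c)⁻¹ •
            (gaussOp K c (Finsupp.single (-(n : ℤ) - 1) 1) - Finsupp.single (-(n : ℤ)) 1) := by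
        rw [gaussOp_single, sub_add_cancel, add_sub_cancel_right, Finsupp.smul_single,
          smul_eq_mul, mul_one, inv_mul_cancel₀ (hc _)]
      exact hstep ▸ S.smul_mem _ (S.sub_mem (hT _) ih)
  refine Submodule.eq_top_iff'.mpr fun f => ?_
  induction f using Finsupp.induction_linear with
  | zero => exact S.zero_mem
  | add f g hf hg => exact S.add_mem hf hg
  | single n b => exact Finsupp.smul_single_one n b ▸ S.smul_mem b (hmonomial n)

end

theorem stmt10_general {K : Type*} [Field K] (c : K)
    (hc : ¬ ∃ n : ℤ, c = (n : K)) :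
    Function.Injective (gaussOp K c) ∧
      Module.finrank K ((ℤ →₀ K) ⧸ LinearMap.range (gaussOp K c)) = 1 := by
  have hc' (k : ℤ) : (k : K) + c ≠ 0 := fun h =>
    hc ⟨-k, by rw [Int.cast_neg]; linear_combination h⟩
  exact ⟨gaussOp_injective hc',
    Submodule.finrank_quotient_eq_one_of_sup_span_singleton_eq_top
      (single_zero_one_notMem_range_gaussOp hc') (range_gaussOp_sup_span_single_zero_eq_top hc')⟩

/-- For `K` of characteristic zero and `c ∈ K` not an integer, the map
`T f = z·f' + c·f + z·f` on `K[z, z⁻¹]` is injective with one-dimensional cokernel: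
the algebraic "Gauss sum" computation `H(𝔾_m, Ψ(c) ⊗ exp)` is one-dimensional,
concentrated in degree 0. -/
theorem stmt10 {K : Type*} [Field K] [CharZero K] (c : K)
    (hc : ¬ ∃ n : ℤ, c = (n : K)) :
    Function.Injective (gaussOp K c) ∧
      Module.finrank K ((ℤ →₀ K) ⧸ LinearMap.range (gaussOp K c)) = 1 :=
  stmt10_general c hc
end

section
/- Let K be a field of characteristic zero and c, c' ∈ K. The Kummer modules M_c and M_{c'}, where M_c is the K[z, z⁻¹]-module K[z, z⁻¹] equipped with the derivation operator ∂(f) = f' + (c/z)·f, are isomorphic as modules with connection (i.e., via a K[z,z⁻¹]-linear bijection commuting with the respective operators z·∂) if and only if c − c' is an integer. -/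
/-- The Kummer connection operator `D_c f = z·f' + c·f` on the Kummer module
`M_c = K[z, z⁻¹]`, realized as the group algebra `AddMonoidAlgebra K ℤ`. -/
noncomputable def kummerD (K : Type*) [Field K] (c : K) (f : AddMonoidAlgebra K ℤ) :
    AddMonoidAlgebra K ℤ :=
  let g : ℤ →₀ K := f.coeff
  AddMonoidAlgebra.ofCoeff (zmul K (zderiv K g) + c • g)

/-!
`D_c` acts diagonally on the monomial basis, `D_c zᵐ = (m + c) zᵐ`. A `K[z, z⁻¹]`-linear
isomorphism `φ : M_c ≅ M_{c'}` commutes with scalars, so `D_c 1 = c` turns the intertwining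
relation into `D_{c'} u = c u` for the nonzero element `u = φ 1`; comparing coefficients at any
`m` in the support of `u` gives `c = m + c'`. Conversely, if `c = c' + n` then
multiplication by the unit `zⁿ` intertwines `D_c` and `D_{c'}`.
-/

section

open AddMonoidAlgebra

variable {K : Type*} [Field K]

lemma zmul_zderiv_apply (f : ℤ →₀ K) (m : ℤ) :
    zmul K (zderiv K f) m = (m : K) * f m := by
  induction f using Finsupp.induction_linear with
  | zero => simp
  | add f g hf hg => simp [hf, hg, mul_add]
  | single n a =>
    simp only [zmul, zderiv, Finsupp.lsum_single, LinearMap.comp_apply, LinearMap.lsmul_apply,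
      Finsupp.lsingle_apply, smul_eq_mul, sub_add_cancel, Finsupp.single_apply]
    split_ifs with h
    · rw [h]
    · simp

lemma kummerD_coeff (c : K) (f : AddMonoidAlgebra K ℤ) (m : ℤ) :
    (kummerD K c f).coeff m = ((m : K) + c) * f.coeff m := by
  change (zmul K (zderiv K f.coeff) + c • f.coeff) m = _
  rw [Finsupp.add_apply, zmul_zderiv_apply, Finsupp.smul_apply, smul_eq_mul, add_mul]

lemma kummerD_one (c : K) : kummerD K c 1 = c • 1 := by
  ext m
  rw [kummerD_coeff, coeff_smul, Finsupp.smul_apply, one_def, coeff_single, Finsupp.single_apply,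
    smul_eq_mul]
  split_ifs with h
  · rw [← h, Int.cast_zero, zero_add]
  · rw [mul_zero, mul_zero]

lemma exists_int_eq_add_of_kummerD_eq_smul {c a : K} {u : AddMonoidAlgebra K ℤ} (hu : u ≠ 0)
    (h : kummerD K c u = a • u) : ∃ m : ℤ, a = m + c := by
  obtain ⟨m, hm⟩ : ∃ m, u.coeff m ≠ 0 := by
    by_contra! hzero
    exact hu (AddMonoidAlgebra.ext (Finsupp.ext hzero))
  have hcoeff := congr_arg (fun v : AddMonoidAlgebra K ℤ => v.coeff m) h
  simp only [kummerD_coeff, coeff_smul] at hcoeff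
  exact ⟨m, (mul_right_cancel₀ hm hcoeff).symm⟩

lemma kummerD_single_one_mul (c : K) (n : ℤ) (f : AddMonoidAlgebra K ℤ) :
    kummerD K c (single n 1 * f) = single n 1 * kummerD K (c + n) f := by
  ext m
  simp only [kummerD_coeff, coeff_single_mul_apply, one_mul, Int.cast_add, Int.cast_neg]
  ring

variable (K) in
noncomputable def monomialUnit (n : ℤ) : (AddMonoidAlgebra K ℤ)ˣ :=
  Units.map (AddMonoidAlgebra.of K ℤ) (toUnits (Multiplicative.ofAdd n))

lemma coe_monomialUnit (n : ℤ) : (monomialUnit K n : AddMonoidAlgebra K ℤ) = single n 1 := rfl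

end

theorem stmt11_general {K : Type*} [Field K] (c c' : K) :
    (∃ φ : AddMonoidAlgebra K ℤ ≃ₗ[AddMonoidAlgebra K ℤ] AddMonoidAlgebra K ℤ,
        ∀ f, φ (kummerD K c f) = kummerD K c' (φ f)) ↔
      ∃ n : ℤ, c - c' = (n : K) := by
  constructor
  · rintro ⟨φ, hφ⟩
    have hφ1 : kummerD K c' (φ 1) = c • φ 1 := by
      rw [← hφ, kummerD_one]
      exact φ.toLinearMap.map_smul_of_tower c 1
    obtain ⟨m, hm⟩ :=
      exists_int_eq_add_of_kummerD_eq_smul (φ.map_ne_zero_iff.mpr one_ne_zero) hφ1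
    exact ⟨m, sub_eq_of_eq_add hm⟩
  · rintro ⟨n, hn⟩
    refine ⟨LinearEquiv.smulOfUnit (monomialUnit K n), fun f => ?_⟩
    change monomialUnit K n • kummerD K c f = kummerD K c' (monomialUnit K n • f)
    rw [Units.smul_def, Units.smul_def, coe_monomialUnit, smul_eq_mul, smul_eq_mul,
      kummerD_single_one_mul, ← hn, add_sub_cancel]

/-- For `K` of characteristic zero, the Kummer modules `M_c` and `M_{c'}`
are isomorphic as modules with connection (a `K[z,z⁻¹]`-linear bijection `φ` with
`φ ∘ D_c = D_{c'} ∘ φ`) iff `c − c'` is an integer. -/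
theorem stmt11 {K : Type*} [Field K] [CharZero K] (c c' : K) :
    (∃ φ : AddMonoidAlgebra K ℤ ≃ₗ[AddMonoidAlgebra K ℤ] AddMonoidAlgebra K ℤ,
        ∀ f, φ (kummerD K c f) = kummerD K c' (φ f)) ↔
      ∃ n : ℤ, c - c' = (n : K) :=
  stmt11_general c c'
end

section
/- Let Λ be a lattice with a ℤ-valued symmetric bilinear form (·,·)_Kil which is positive definite on the span of the simple coroots, and let c be an irrational real number. For dominant coweights λ₁ ≠ λ₂ with λ₂ − λ₁ in the non-negative integer span of simple coroots, the real number c·((λ₂, λ₂ + 2ρ) − (λ₁, λ₁ + 2ρ)) is not an integer. -/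
/-- Let `Λ` be the coweight lattice with a ℤ-valued symmetric bilinear
form `B = (·,·)_Kil` positive definite on the span of the simple coroots, `ρ₂ = 2ρ`
(twice the half-sum of positive coroots, so `(2ρ, α̌ᵢ) > 0`), and `c` irrational.
For dominant coweights `λ₁ ≠ λ₂` (non-negative pairing with the simple coroots via the
form) with `λ₂ − λ₁` a non-negative integer combination of simple coroots,
`c · ((λ₂, λ₂ + 2ρ) − (λ₁, λ₁ + 2ρ))` is not an integer. -/
theorem stmt14 {I Λ : Type*} [Fintype I] [AddCommGroup Λ] [Module ℤ Λ]
    (B : Λ →ₗ[ℤ] Λ →ₗ[ℤ] ℤ)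
    (hsymm : ∀ x y, B x y = B y x)
    (coroot : I → Λ)
    (hpos : ∀ v ∈ Submodule.span ℤ (Set.range coroot), v ≠ 0 → 0 < B v v)
    (ρ₂ : Λ) (hρ : ∀ i, 0 < B ρ₂ (coroot i))
    (lam₁ lam₂ : Λ)
    (hd₁ : ∀ i, 0 ≤ B lam₁ (coroot i))
    (hd₂ : ∀ i, 0 ≤ B lam₂ (coroot i))
    (m : I → ℕ)
    (hdiff : lam₂ - lam₁ = ∑ i, (m i : ℤ) • coroot i)
    (hne : lam₁ ≠ lam₂)
    (c : ℝ) (hc : Irrational c) :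
    ¬ ∃ k : ℤ, c * ((B lam₂ (lam₂ + ρ₂) - B lam₁ (lam₁ + ρ₂) : ℤ) : ℝ) = (k : ℝ) := by
  rintro ⟨k, hk⟩
  set μ := lam₂ - lam₁ with hμ
  have hμ0 : μ ≠ 0 := sub_ne_zero.mpr (Ne.symm hne)
  have hμspan : μ ∈ Submodule.span ℤ (Set.range coroot) := by
    rw [hdiff]
    exact Submodule.sum_mem _ fun i _ =>
      zsmul_mem (Submodule.subset_span (Set.mem_range_self i)) _
  have hBμμ : 0 < B μ μ := hpos μ hμspan hμ0
  have hl1μ : 0 ≤ B lam₁ μ := by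
    rw [hdiff, map_sum]
    refine Finset.sum_nonneg fun i _ => ?_
    rw [map_zsmul, smul_eq_mul]
    exact mul_nonneg (Int.natCast_nonneg _) (hd₁ i)
  have hρμ : 0 ≤ B ρ₂ μ := by
    rw [hdiff, map_sum]
    refine Finset.sum_nonneg fun i _ => ?_
    rw [map_zsmul, smul_eq_mul]
    exact mul_nonneg (Int.natCast_nonneg _) (hρ i).le
  have hlam2 : lam₂ = lam₁ + μ := by rw [hμ]; abel
  have hdef : B lam₂ (lam₂ + ρ₂) - B lam₁ (lam₁ + ρ₂)
      = B μ μ + 2 * B lam₁ μ + B ρ₂ μ := by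
    rw [hlam2]
    simp only [map_add, LinearMap.add_apply, hsymm μ lam₁, hsymm μ ρ₂]
    ring
  have hdpos : 0 < B lam₂ (lam₂ + ρ₂) - B lam₁ (lam₁ + ρ₂) := by
    rw [hdef]; linarith
  set d : ℤ := B lam₂ (lam₂ + ρ₂) - B lam₁ (lam₁ + ρ₂)
  have hd0 : (d : ℝ) ≠ 0 := Int.cast_ne_zero.mpr hdpos.ne'
  apply hc
  refine ⟨(k : ℚ) / (d : ℚ), ?_⟩
  push_cast
  field_simp
  linarith [hk]
end
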